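/- Let G be the graph on vertex set {x, y, a_1, …, a_k, b_1, …, b_k} (k ≥ 2) with edges a_i a_{i+1}, b_i b_{i+1}, a_i b_{i+1}, b_i a_{i+1} for all 1 ≤ i ≤ k−1, together with xy, xa_1, xb_1, ya_1, yb_1. Then nac(G) = 2^{2k−2} − 1, i.e., 2^{n−4} − 1 where n = 2k+2 is the number of vertices. -/

import Mathlib

open scoped Classical

namespace NAC

variable {V : Type*}

/-- Number of edges of `G` in the list `l` whose colour under `c` is `b`. -/
noncomputable def cCount (G : SimpleGraph V) (c : G.edgeSet → Bool) (b : Bool)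
    (l : List (Sym2 V)) : ℕ :=
  (l.filter fun e => decide (∃ h : e ∈ G.edgeSet, c ⟨e, h⟩ = b)).length

/-- `c` is a NAC-colouring of `G`: it is surjective (both colours are used) and no
cycle of `G` contains exactly one edge of either colour. -/
def IsNAC (G : SimpleGraph V) (c : G.edgeSet → Bool) : Prop :=
  Function.Surjective c ∧
  ∀ ⦃u : V⦄ (w : G.Walk u u), w.IsCycle →
    cCount G c true w.edges ≠ 1 ∧ cCount G c false w.edges ≠ 1

/-- The number of NAC-colourings of `G`, divided by two. -/
noncomputable def nacNum (G : SimpleGraph V) : ℕ :=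
  {c : G.edgeSet → Bool | IsNAC G c}.ncard / 2

end NAC

namespace NAC

/-- The minimally rigid graph `G_k`: vertices `x = inl 0`, `y = inl 1`, `aᵢ = inr (i, 0)`,
`bᵢ = inr (i, 1)`; edges `xy, xa₁, xb₁, ya₁, yb₁` and `aᵢaᵢ₊₁, bᵢbᵢ₊₁, aᵢbᵢ₊₁, bᵢaᵢ₊₁`. -/
def Gk (k : ℕ) : SimpleGraph (Fin 2 ⊕ (Fin k × Fin 2)) :=
  SimpleGraph.fromRel (fun x y =>
    match x, y with
    | .inl _, .inl _ => True
    | .inl _, .inr (i, _) => i.val = 0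
    | .inr (i, _), .inr (j, _) => j.val = i.val + 1
    | .inr _, .inl _ => False)

end NAC

namespace NAC

open SimpleGraph Walk

variable {V : Type*} {G : SimpleGraph V}

/-! ### Generic lemmas about `cCount` and cycles -/

lemma cCount_nil (G : SimpleGraph V) (c : G.edgeSet → Bool) (b : Bool) :
    cCount G c b [] = 0 := rfl

lemma cCount_cons (G : SimpleGraph V) (c : G.edgeSet → Bool) (b : Bool) (e : Sym2 V)
    (l : List (Sym2 V)) :
    cCount G c b (e :: l) =
      (if ∃ h : e ∈ G.edgeSet, c ⟨e, h⟩ = b then 1 else 0) + cCount G c b l := by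
  simp only [cCount, List.filter_cons]
  by_cases h : ∃ h : e ∈ G.edgeSet, c ⟨e, h⟩ = b <;> simp [h, Nat.add_comm]

lemma exists_colour_iff {G : SimpleGraph V} {c : G.edgeSet → Bool} {b : Bool}
    {a b' : V} (h : G.Adj a b') :
    (∃ hh : s(a, b') ∈ G.edgeSet, c ⟨s(a, b'), hh⟩ = b) ↔ c ⟨s(a, b'), h⟩ = b := by
  constructor
  · rintro ⟨hh, e⟩; exact e
  · intro e; exact ⟨h, e⟩

lemma cCount_perm (G : SimpleGraph V) (c : G.edgeSet → Bool) (b : Bool)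
    {l l' : List (Sym2 V)} (h : l.Perm l') : cCount G c b l = cCount G c b l' :=
  (h.filter _).length_eq

lemma two_le_cCount {G : SimpleGraph V} {c : G.edgeSet → Bool} {bo : Bool}
    {l : List (Sym2 V)} (hn : l.Nodup) {e₁ e₂ : Sym2 V}
    (h1 : e₁ ∈ l) (h2 : e₂ ∈ l) (hne : e₁ ≠ e₂)
    (p1 : ∃ h : e₁ ∈ G.edgeSet, c ⟨e₁, h⟩ = bo)
    (p2 : ∃ h : e₂ ∈ G.edgeSet, c ⟨e₂, h⟩ = bo) :
    2 ≤ cCount G c bo l := by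
  classical
  have hm1 : e₁ ∈ l.filter (fun e => decide (∃ h : e ∈ G.edgeSet, c ⟨e, h⟩ = bo)) := by
    rw [List.mem_filter]; exact ⟨h1, by simpa using p1⟩
  have hm2 : e₂ ∈ l.filter (fun e => decide (∃ h : e ∈ G.edgeSet, c ⟨e, h⟩ = bo)) := by
    rw [List.mem_filter]; exact ⟨h2, by simpa using p2⟩
  have hnf : (l.filter (fun e => decide (∃ h : e ∈ G.edgeSet, c ⟨e, h⟩ = bo))).Nodup :=
    hn.filter _
  have hsub : ({e₁, e₂} : Finset (Sym2 V)) ⊆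
      (l.filter (fun e => decide (∃ h : e ∈ G.edgeSet, c ⟨e, h⟩ = bo))).toFinset := by
    intro e he
    simp only [Finset.mem_insert, Finset.mem_singleton] at he
    rw [List.mem_toFinset]
    rcases he with rfl | rfl
    · exact hm1
    · exact hm2
  have := Finset.card_le_card hsub
  rwa [Finset.card_pair hne, List.toFinset_card_of_nodup hnf] at this

lemma parity_walk {G : SimpleGraph V} (f : V → ZMod 2) (c : G.edgeSet → Bool) (bo : Bool) :
    ∀ {u v : V} (p : G.Walk u v),
      (∀ (a b' : V) (h : G.Adj a b'), s(a, b') ∈ p.edges →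
        ((c ⟨s(a, b'), h⟩ = bo) ↔ f a ≠ f b')) →
      (cCount G c bo p.edges : ZMod 2) = f u + f v := by
  intro u v p
  induction p with
  | nil => intro _; simp [cCount_nil]; exact (CharTwo.add_self_eq_zero _).symm
  | @cons u w v h p ih =>
    intro hyp
    have hhead : (c ⟨s(u, w), h⟩ = bo) ↔ f u ≠ f w :=
      hyp u w h (by simp)
    have htail := ih (fun a b' hab hm => hyp a b' hab (by simp [hm]))
    rw [SimpleGraph.Walk.edges_cons, cCount_cons]
    have hz2 : ∀ x y : ZMod 2, x ≠ y ↔ x + y = 1 := by decide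
    by_cases hc : c ⟨s(u, w), h⟩ = bo
    · rw [if_pos ((exists_colour_iff h).2 hc)]
      have h1 : f u + f w = 1 := (hz2 _ _).1 (hhead.1 hc)
      push_cast
      rw [htail]
      have h2 : f u = f w + 1 := by
        have h3 : ∀ x y : ZMod 2, x + y = 1 → x = y + 1 := by decide
        exact h3 _ _ h1
      rw [h2]; ring
    · rw [if_neg (fun hh => hc ((exists_colour_iff h).1 hh))]
      have heq : f u = f w := by
        by_contra hne; exact hc (hhead.2 hne)
      push_cast
      rw [htail, heq, zero_add]

lemma cCount_ne_one_of_closed_parity {G : SimpleGraph V} (f : V → ZMod 2)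
    {c : G.edgeSet → Bool} {bo : Bool} {u : V} (p : G.Walk u u)
    (hyp : ∀ (a b' : V) (h : G.Adj a b'), s(a, b') ∈ p.edges →
        ((c ⟨s(a, b'), h⟩ = bo) ↔ f a ≠ f b')) :
    cCount G c bo p.edges ≠ 1 := by
  intro h1
  have := parity_walk f c bo p hyp
  rw [h1] at this
  simp at this
  exact one_ne_zero ((CharTwo.add_self_eq_zero (f u)) ▸ this ▸ rfl : (1 : ZMod 2) = 0)

lemma triangle_isCycle {u v w : V} (h1 : G.Adj u v) (h2 : G.Adj v w) (h3 : G.Adj w u) :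
    (Walk.cons h1 (Walk.cons h2 (Walk.cons h3 Walk.nil))).IsCycle := by
  have huv := h1.ne
  have hvw := h2.ne
  have hwu := h3.ne
  have huv' := huv.symm
  have hvw' := hvw.symm
  have hwu' := hwu.symm
  rw [Walk.cons_isCycle_iff]
  constructor
  · simp [Walk.isPath_def, hvw, hwu, hwu', huv', hvw']
  · simp only [Walk.edges_cons, Walk.edges_nil, List.mem_cons, List.not_mem_nil, or_false]
    push_neg
    constructor <;> · rw [Ne, Sym2.eq_iff]; tauto

lemma quad_isCycle {u v w z : V} (h1 : G.Adj u v) (h2 : G.Adj v w) (h3 : G.Adj w z)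
    (h4 : G.Adj z u) (huw : u ≠ w) (hvz : v ≠ z) :
    (Walk.cons h1 (Walk.cons h2 (Walk.cons h3 (Walk.cons h4 Walk.nil)))).IsCycle := by
  have huv := h1.ne
  have hvw := h2.ne
  have hwz := h3.ne
  have hzu := h4.ne
  have huv' := huv.symm
  have hvw' := hvw.symm
  have hwz' := hwz.symm
  have hzu' := hzu.symm
  have huw' := huw.symm
  have hvz' := hvz.symm
  rw [Walk.cons_isCycle_iff]
  constructor
  · simp [Walk.isPath_def, hvw, hwz, hzu, hvz, huw', hzu', huv', hvw', hwz', hvz', huw]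
  · simp only [Walk.edges_cons, Walk.edges_nil, List.mem_cons, List.not_mem_nil, or_false]
    push_neg
    refine ⟨?_, ?_, ?_⟩ <;> · rw [Ne, Sym2.eq_iff]; tauto

lemma cycle_two_edges_at {u : V} {p : G.Walk u u} (hp : p.IsCycle) :
    ∃ e₁ e₂ : Sym2 V, e₁ ∈ p.edges ∧ e₂ ∈ p.edges ∧ e₁ ≠ e₂ ∧ u ∈ e₁ ∧ u ∈ e₂ := by
  cases p with
  | nil => exact absurd rfl hp.ne_nil
  | @cons _ v _ h q =>
    rw [Walk.cons_isCycle_iff] at hp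
    refine ⟨s(u, v), ?_⟩
    have hq3 : 1 ≤ q.length := by
      by_contra hlen
      push_neg at hlen
      interval_cases hq : q.length
      · exact h.ne (Walk.eq_of_length_eq_zero hq).symm
    have hqnil : ¬ q.Nil := by
      intro hnil
      rw [Walk.nil_iff_length_eq] at hnil
      omega
    have hrev : ¬ q.reverse.Nil := by
      rwa [Walk.nil_iff_length_eq, Walk.length_reverse, ← Walk.nil_iff_length_eq]
    cases hqr : q.reverse with
    | nil => rw [hqr] at hrev; simp at hrev
    | @cons _ w _ h' q' =>
      refine ⟨s(u, w), ?_, ?_, ?_, ?_, ?_⟩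
      · simp
      · have : s(u, w) ∈ q.reverse.edges := by rw [hqr]; simp
        rw [Walk.edges_reverse, List.mem_reverse] at this
        simp [this]
      · intro he
        apply hp.2
        have : s(u, w) ∈ q.reverse.edges := by rw [hqr]; simp
        rw [Walk.edges_reverse, List.mem_reverse] at this
        rwa [he]
      · simp
      · simp

lemma col_symm (c : G.edgeSet → Bool) {a b : V} (h : G.Adj a b) :
    c ⟨s(a, b), h⟩ = c ⟨s(b, a), h.symm⟩ := by
  congr 1
  exact Subtype.ext Sym2.eq_swap.symm

lemma tri_eq {c : G.edgeSet → Bool}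
    (hN : ∀ ⦃u : V⦄ (w : G.Walk u u), w.IsCycle →
      cCount G c true w.edges ≠ 1 ∧ cCount G c false w.edges ≠ 1)
    {u v w : V} (h1 : G.Adj u v) (h2 : G.Adj v w) (h3 : G.Adj w u) :
    c ⟨s(u, v), h1⟩ = c ⟨s(v, w), h2⟩ ∧ c ⟨s(u, v), h1⟩ = c ⟨s(w, u), h3⟩ := by
  obtain ⟨ht, hf⟩ := hN _ (triangle_isCycle h1 h2 h3)
  simp only [Walk.edges_cons, Walk.edges_nil] at ht hf
  rw [cCount_cons, cCount_cons, cCount_cons, cCount_nil] at ht hf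
  simp only [exists_colour_iff h1, exists_colour_iff h2, exists_colour_iff h3] at ht hf
  revert ht hf
  generalize c ⟨s(u, v), h1⟩ = b1
  generalize c ⟨s(v, w), h2⟩ = b2
  generalize c ⟨s(w, u), h3⟩ = b3
  cases b1 <;> cases b2 <;> cases b3 <;> simp

lemma quad_parity {c : G.edgeSet → Bool}
    (hN : ∀ ⦃u : V⦄ (w : G.Walk u u), w.IsCycle →
      cCount G c true w.edges ≠ 1 ∧ cCount G c false w.edges ≠ 1)
    {u v w z : V} (h1 : G.Adj u v) (h2 : G.Adj v w) (h3 : G.Adj w z) (h4 : G.Adj z u)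
    (huw : u ≠ w) (hvz : v ≠ z) :
    ((c ⟨s(u, v), h1⟩ != c ⟨s(v, w), h2⟩) != (c ⟨s(w, z), h3⟩ != c ⟨s(z, u), h4⟩)) = false := by
  obtain ⟨ht, hf⟩ := hN _ (quad_isCycle h1 h2 h3 h4 huw hvz)
  simp only [Walk.edges_cons, Walk.edges_nil] at ht hf
  rw [cCount_cons, cCount_cons, cCount_cons, cCount_cons, cCount_nil] at ht hf
  simp only [exists_colour_iff h1, exists_colour_iff h2, exists_colour_iff h3,
    exists_colour_iff h4] at ht hf
  revert ht hf
  generalize c ⟨s(u, v), h1⟩ = b1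
  generalize c ⟨s(v, w), h2⟩ = b2
  generalize c ⟨s(w, z), h3⟩ = b3
  generalize c ⟨s(z, u), h4⟩ = b4
  cases b1 <;> cases b2 <;> cases b3 <;> cases b4 <;> simp

/-! ### The graph `Gk` -/

variable {k : ℕ}

abbrev Vt (k : ℕ) := Fin 2 ⊕ (Fin k × Fin 2)

lemma adj_xy (z z' : Fin 2) (h : z ≠ z') : (Gk k).Adj (.inl z) (.inl z') := by
  rw [Gk, SimpleGraph.fromRel_adj]
  exact ⟨by simp [h], Or.inl trivial⟩

lemma adj_base (z : Fin 2) (i : Fin k) (hi : i.val = 0) (s : Fin 2) :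
    (Gk k).Adj (.inl z) (.inr (i, s)) := by
  rw [Gk, SimpleGraph.fromRel_adj]
  exact ⟨by simp, Or.inl hi⟩

lemma adj_block {i j : Fin k} (hij : j.val = i.val + 1) (s t : Fin 2) :
    (Gk k).Adj (.inr (i, s)) (.inr (j, t)) := by
  rw [Gk, SimpleGraph.fromRel_adj]
  refine ⟨by simp; intro he; omega, Or.inl hij⟩

lemma adj_cases {a b : Vt k} (h : (Gk k).Adj a b) :
    (∃ z z' : Fin 2, z ≠ z' ∧ a = .inl z ∧ b = .inl z') ∨
    (∃ (z : Fin 2) (i : Fin k) (s : Fin 2), i.val = 0 ∧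
      ((a = .inl z ∧ b = .inr (i, s)) ∨ (a = .inr (i, s) ∧ b = .inl z))) ∨
    (∃ (i j : Fin k) (s t : Fin 2), (j.val = i.val + 1 ∨ i.val = j.val + 1) ∧
      a = .inr (i, s) ∧ b = .inr (j, t)) := by
  rw [Gk, SimpleGraph.fromRel_adj] at h
  obtain ⟨hne, hr⟩ := h
  rcases a with z | ⟨i, s⟩ <;> rcases b with z' | ⟨j, t⟩
  · exact Or.inl ⟨z, z', fun he => hne (by rw [he]), rfl, rfl⟩
  · refine Or.inr (Or.inl ⟨z, j, t, ?_, Or.inl ⟨rfl, rfl⟩⟩)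
    simpa using hr
  · refine Or.inr (Or.inl ⟨z', i, s, ?_, Or.inr ⟨rfl, rfl⟩⟩)
    simpa using hr
  · refine Or.inr (Or.inr ⟨i, j, s, t, ?_, rfl, rfl⟩)
    simpa [or_comm] using hr

/-! ### Cut colourings -/

def vf (g : Fin (k - 1) × Fin 2 → Bool) : Vt k → Bool
  | .inl _ => false
  | .inr (i, s) =>
      if h : i.val = 0 then false
      else g (⟨i.val - 1, by have := i.isLt; omega⟩, s)

noncomputable def Fmap (p : Bool × (Fin (k - 1) × Fin 2 → Bool)) :
    (Gk k).edgeSet → Bool :=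
  fun e => Sym2.lift ⟨fun a b => ((vf p.2 a != vf p.2 b) != p.1),
    by
      intro a b
      show ((vf p.2 a != vf p.2 b) != p.1) = ((vf p.2 b != vf p.2 a) != p.1)
      cases vf p.2 a <;> cases vf p.2 b <;> rfl⟩ e.val

lemma Fmap_apply (g : Fin (k - 1) × Fin 2 → Bool) (bb : Bool) {a b : Vt k}
    (h : (Gk k).Adj a b) :
    Fmap (bb, g) ⟨s(a, b), h⟩ = ((vf g a != vf g b) != bb) := by
  simp [Fmap]

lemma vf_inl (g : Fin (k - 1) × Fin 2 → Bool) (z : Fin 2) : vf g (.inl z) = false := rfl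

lemma vf_inr_zero (g : Fin (k - 1) × Fin 2 → Bool) {i : Fin k} (hi : i.val = 0) (s : Fin 2) :
    vf g (.inr (i, s)) = false := by
  simp [vf, hi]

lemma vf_of_adj_inl (g : Fin (k - 1) × Fin 2 → Bool) {z : Fin 2} {b : Vt k}
    (h : (Gk k).Adj (.inl z) b) : vf g b = false := by
  rcases adj_cases h with ⟨z1, z2, _, _, rfl⟩ | ⟨z1, i, s, hi, hc⟩ | ⟨i, j, s, t, _, hc, _⟩
  · rfl
  · rcases hc with ⟨_, rfl⟩ | ⟨hc, _⟩
    · exact vf_inr_zero g hi s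
    · exact absurd hc (by simp)
  · exact absurd hc (by simp)

end NAC
section
open SimpleGraph Walk
namespace NAC
variable {k : ℕ}

lemma vf_succ (g : Fin (k - 1) × Fin 2 → Bool) (j : Fin (k - 1)) (s : Fin 2) :
    vf g (.inr (⟨j.val + 1, by have := j.isLt; omega⟩, s)) = g (j, s) := by
  simp only [vf]
  rw [dif_neg (Nat.succ_ne_zero _)]
  congr 1

lemma exists_cross (g : Fin (k - 1) × Fin 2 → Bool) :
    ∀ (i : ℕ) (hi : i < k) (s : Fin 2), vf g (.inr (⟨i, hi⟩, s)) = true →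
      ∃ (a b : Vt k) (h : (Gk k).Adj a b), vf g a ≠ vf g b := by
  intro i
  induction i with
  | zero => intro hi s hv; rw [vf_inr_zero g rfl s] at hv; exact absurd hv (by simp)
  | succ n ih =>
    intro hi s hv
    by_cases h0 : vf g (.inr (⟨n, by omega⟩, (0 : Fin 2))) = true
    · exact ih (by omega) 0 h0
    · refine ⟨_, _, adj_block (i := ⟨n, by omega⟩) (j := ⟨n + 1, hi⟩) rfl 0 s, ?_⟩
      rw [hv]
      simp only [Bool.not_eq_true] at h0
      rw [h0]
      simp

lemma Fmap_surj (bb : Bool) (g : Fin (k - 1) × Fin 2 → Bool)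
    (hg : g ≠ fun _ => false) : Function.Surjective (Fmap (bb, g)) := by
  intro bo
  by_cases hbo : bo = bb
  · refine ⟨⟨s(.inl 0, .inl 1), adj_xy 0 1 (by decide)⟩, ?_⟩
    rw [show ((⟨s(.inl 0, .inl 1), adj_xy 0 1 (by decide)⟩ : (Gk k).edgeSet)) =
      ⟨s((.inl 0 : Vt k), .inl 1), adj_xy 0 1 (by decide)⟩ from rfl]
    rw [Fmap_apply, vf_inl, vf_inl, hbo]
    simp
  · rw [Function.ne_iff] at hg
    obtain ⟨⟨j, s⟩, hj⟩ := hg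
    simp only [Bool.not_eq_false] at hj
    obtain ⟨a, b, hab, hne⟩ := exists_cross g (j.val + 1) (by have := j.isLt; omega) s
      (by rw [vf_succ]; exact hj)
    refine ⟨⟨s(a, b), hab⟩, ?_⟩
    rw [Fmap_apply]
    have hx : (vf g a != vf g b) = true := by
      cases ha : vf g a <;> cases hb : vf g b <;> simp_all
    rw [hx]
    cases bb <;> cases bo <;> simp_all

lemma Fmap_colour_of_mem_inl (bb : Bool) (g : Fin (k - 1) × Fin 2 → Bool) (z : Fin 2) :
    ∀ e : Sym2 (Vt k), ∀ hee : e ∈ (Gk k).edgeSet, (.inl z : Vt k) ∈ e →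
      Fmap (bb, g) ⟨e, hee⟩ = bb := by
  intro e
  induction e using Sym2.ind with
  | _ a b =>
    intro hee hze
    have hadj : (Gk k).Adj a b := hee
    rw [Sym2.mem_iff] at hze
    rcases hze with rfl | rfl
    · rw [Fmap_apply _ _ hadj, vf_inl, vf_of_adj_inl g hadj]
      simp
    · rw [Fmap_apply _ _ hadj, vf_of_adj_inl g hadj.symm, vf_inl]
      simp

lemma Fmap_count_notbb (bb : Bool) (g : Fin (k - 1) × Fin 2 → Bool) {u : Vt k}
    (w : (Gk k).Walk u u) :
    cCount (Gk k) (Fmap (bb, g)) (!bb) w.edges ≠ 1 := by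
  apply cCount_ne_one_of_closed_parity (fun v => if vf g v then 1 else 0)
  intro a b h _
  rw [Fmap_apply]
  cases hva : vf g a <;> cases hvb : vf g b <;> cases bb <;>
    simp [hva, hvb] <;> decide

lemma Fmap_count_bb (bb : Bool) (g : Fin (k - 1) × Fin 2 → Bool) {u : Vt k}
    (w : (Gk k).Walk u u) (hw : w.IsCycle) :
    cCount (Gk k) (Fmap (bb, g)) bb w.edges ≠ 1 := by
  rcases Classical.em (∃ z : Fin 2, (Sum.inl z : Vt k) ∈ w.support) with hx | hx
  · obtain ⟨z, hz⟩ := hx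
    have hrot := hw.rotate hz
    rw [← cCount_perm _ _ _ ((w.rotate_edges _ hz).perm)]
    obtain ⟨e₁, e₂, m1, m2, hne, i1, i2⟩ := cycle_two_edges_at hrot
    have hnodup : (w.rotate _ hz).edges.Nodup := hrot.edges_nodup
    have he1 : e₁ ∈ (Gk k).edgeSet := (w.rotate _ hz).edges_subset_edgeSet m1
    have he2 : e₂ ∈ (Gk k).edgeSet := (w.rotate _ hz).edges_subset_edgeSet m2
    intro hcon
    have h2 := two_le_cCount hnodup m1 m2 hne
      ⟨he1, Fmap_colour_of_mem_inl bb g z e₁ he1 i1⟩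
      ⟨he2, Fmap_colour_of_mem_inl bb g z e₂ he2 i2⟩
    omega
  · push_neg at hx
    apply cCount_ne_one_of_closed_parity
      (Sum.elim (fun _ => (0 : ZMod 2))
        (fun p => (if vf g (.inr p) then 1 else 0) + (p.1.val : ZMod 2)))
    intro a b h hm
    have ha : a ∈ w.support := w.fst_mem_support_of_mem_edges hm
    have hb : b ∈ w.support := w.snd_mem_support_of_mem_edges hm
    rcases adj_cases h with ⟨z1, z2, _, rfl, _⟩ | ⟨z1, i, s, hi, hc⟩ |
        ⟨i, j, s, t, hij, rfl, rfl⟩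
    · exact absurd ha (hx z1)
    · rcases hc with ⟨rfl, _⟩ | ⟨_, rfl⟩
      · exact absurd ha (hx z1)
      · exact absurd hb (hx z1)
    · have step1 : (Fmap (bb, g) ⟨s(Sum.inr (i, s), Sum.inr (j, t)), h⟩ = bb) ↔
          vf g (.inr (i, s)) = vf g (.inr (j, t)) := by
        rw [Fmap_apply]
        cases vf g (.inr (i, s)) <;> cases vf g (.inr (j, t)) <;> cases bb <;> simp
      rw [step1]
      simp only [Sum.elim_inr]
      have key : ∀ (c d x y : ZMod 2), (y = x + 1 ∨ x = y + 1) →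
          ((c + x ≠ d + y) ↔ c = d) := by decide
      have hxy : ((j.val : ZMod 2)) = (i.val : ZMod 2) + 1 ∨
          (i.val : ZMod 2) = (j.val : ZMod 2) + 1 := by
        rcases hij with hij | hij
        · left; rw [hij]; push_cast; ring
        · right; rw [hij]; push_cast; ring
      rw [key _ _ _ _ hxy]
      cases hva : vf g (.inr (i, s)) <;> cases hvb : vf g (.inr (j, t)) <;>
        simp [hva, hvb]

lemma isNAC_Fmap (bb : Bool) (g : Fin (k - 1) × Fin 2 → Bool)
    (hg : g ≠ fun _ => false) : IsNAC (Gk k) (Fmap (bb, g)) := by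
  refine ⟨Fmap_surj bb g hg, ?_⟩
  intro u w hw
  cases bb
  · exact ⟨Fmap_count_notbb false g w, Fmap_count_bb false g w hw⟩
  · exact ⟨Fmap_count_bb true g w hw, Fmap_count_notbb true g w⟩

end NAC
end
section
open SimpleGraph Walk
namespace NAC
variable {k : ℕ}

noncomputable def gN (k : ℕ) (c : (Gk k).edgeSet → Bool) (bb : Bool) : ℕ → Fin 2 → Bool
  | 0 => fun _ => false
  | (n + 1) => fun t =>
      if h : n + 1 < k then
        ((c ⟨s(Sum.inr (⟨n, by omega⟩, 0), Sum.inr (⟨n + 1, h⟩, t)),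
            adj_block rfl 0 t⟩) != bb) != gN k c bb n 0
      else false

lemma gN_succ (c : (Gk k).edgeSet → Bool) (bb : Bool) (n : ℕ) (h : n + 1 < k) (t : Fin 2) :
    gN k c bb (n + 1) t =
      (((c ⟨s(Sum.inr (⟨n, by omega⟩, 0), Sum.inr (⟨n + 1, h⟩, t)),
        adj_block rfl 0 t⟩) != bb) != gN k c bb n 0) := by
  simp only [gN]
  rw [dif_pos h]

lemma NAC_exists_param (hk : 2 ≤ k) {c : (Gk k).edgeSet → Bool} (hc : IsNAC (Gk k) c) :
    ∃ p : Bool × (Fin (k - 1) × Fin 2 → Bool), p.2 ≠ (fun _ => false) ∧ Fmap p = c := by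
  obtain ⟨hsurj, hN⟩ := hc
  have hk0 : 0 < k := by omega
  have h01 : (0 : Fin 2) ≠ 1 := by decide
  set bb := c ⟨s(Sum.inl 0, Sum.inl 1), adj_xy 0 1 h01⟩ with hbb
  clear_value bb
  -- all five base edges have colour bb
  have hbase : ∀ z s : Fin 2,
      c ⟨s(Sum.inl z, Sum.inr ((⟨0, hk0⟩ : Fin k), s)), adj_base z ⟨0, hk0⟩ rfl s⟩ = bb := by
    intro z s
    obtain ⟨h1, h2⟩ := tri_eq hN (adj_xy 0 1 h01) (adj_base 1 ⟨0, hk0⟩ rfl s)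
      ((adj_base 0 ⟨0, hk0⟩ rfl s).symm)
    fin_cases z
    · rw [hbb]
      exact (col_symm c (adj_base 0 ⟨0, hk0⟩ rfl s)).trans h2.symm
    · rw [hbb]
      exact h1.symm
  -- colours of block edges with left seat 0, by definition of gN
  have main0 : ∀ (i : ℕ) (h1 : i + 1 < k) (t : Fin 2),
      c ⟨s(Sum.inr ((⟨i, by omega⟩ : Fin k), 0), Sum.inr ((⟨i + 1, h1⟩ : Fin k), t)),
        adj_block rfl 0 t⟩ =
      ((gN k c bb i 0 != gN k c bb (i + 1) t) != bb) := by
    intro i h1 t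
    rw [gN_succ c bb i h1 t]
    generalize c ⟨s(Sum.inr ((⟨i, by omega⟩ : Fin k), 0), Sum.inr ((⟨i + 1, h1⟩ : Fin k), t)),
        adj_block rfl 0 t⟩ = X
    generalize gN k c bb i 0 = A
    cases X <;> cases A <;> cases bb <;> rfl
  -- the main claim: colours of all block edges
  have main : ∀ (i : ℕ) (h1 : i + 1 < k) (s t : Fin 2),
      c ⟨s(Sum.inr ((⟨i, by omega⟩ : Fin k), s), Sum.inr ((⟨i + 1, h1⟩ : Fin k), t)),
        adj_block rfl s t⟩ =
      ((gN k c bb i s != gN k c bb (i + 1) t) != bb) := by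
    intro i
    induction i with
    | zero =>
      intro h1 s t
      obtain ⟨sv, hsv⟩ := s
      interval_cases sv
      · exact main0 0 h1 t
      · show c ⟨s(Sum.inr ((⟨0, hk0⟩ : Fin k), 1), Sum.inr ((⟨1, h1⟩ : Fin k), t)),
            adj_block rfl 1 t⟩ = ((gN k c bb 0 0 != gN k c bb (0 + 1) t) != bb)
        have hq := quad_parity hN (adj_base 0 ⟨0, hk0⟩ rfl 0)
          (adj_block (i := (⟨0, hk0⟩ : Fin k)) (j := ⟨1, h1⟩) rfl 0 t)
          ((adj_block (i := (⟨0, hk0⟩ : Fin k)) (j := ⟨1, h1⟩) rfl 1 t).symm)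
          ((adj_base 0 ⟨0, hk0⟩ rfl 1).symm)
          (by simp) (by simp)
        rw [hbase 0 0,
          ← col_symm c (adj_block (i := (⟨0, hk0⟩ : Fin k)) (j := ⟨1, h1⟩) rfl 1 t),
          ← col_symm c (adj_base 0 ⟨0, hk0⟩ rfl 1),
          hbase 0 1] at hq
        have e2 : c ⟨s(Sum.inr ((⟨0, hk0⟩ : Fin k), 0), Sum.inr ((⟨1, h1⟩ : Fin k), t)),
            adj_block rfl 0 t⟩ = ((gN k c bb 0 0 != gN k c bb 1 t) != bb) := main0 0 h1 t
        rw [e2] at hq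
        revert hq
        generalize c ⟨s(Sum.inr ((⟨0, hk0⟩ : Fin k), 1), Sum.inr ((⟨1, h1⟩ : Fin k), t)),
            adj_block rfl 1 t⟩ = X
        generalize gN k c bb 0 0 = A
        generalize gN k c bb 1 t = B
        cases X <;> cases A <;> cases B <;> cases bb <;> decide
    | succ n ih =>
      intro h1 s t
      have h2 : n + 1 < k := by omega
      obtain ⟨sv, hsv⟩ := s
      interval_cases sv
      · exact main0 (n + 1) h1 t
      · show c ⟨s(Sum.inr ((⟨n + 1, h2⟩ : Fin k), 1), Sum.inr ((⟨n + 2, h1⟩ : Fin k), t)),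
            adj_block rfl 1 t⟩ = ((gN k c bb (n + 1) 1 != gN k c bb (n + 1 + 1) t) != bb)
        have hq := quad_parity hN
          (adj_block (i := (⟨n, by omega⟩ : Fin k)) (j := ⟨n + 1, h2⟩) rfl 0 0)
          (adj_block (i := (⟨n + 1, h2⟩ : Fin k)) (j := ⟨n + 2, h1⟩) rfl 0 t)
          ((adj_block (i := (⟨n + 1, h2⟩ : Fin k)) (j := ⟨n + 2, h1⟩) rfl 1 t).symm)
          ((adj_block (i := (⟨n, by omega⟩ : Fin k)) (j := ⟨n + 1, h2⟩) rfl 0 1).symm)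
          (by simp) (by simp [Fin.ext_iff])
        rw [← col_symm c (adj_block (i := (⟨n + 1, h2⟩ : Fin k)) (j := ⟨n + 2, h1⟩) rfl 1 t),
          ← col_symm c (adj_block (i := (⟨n, by omega⟩ : Fin k)) (j := ⟨n + 1, h2⟩) rfl 0 1),
          main0 n h2 0] at hq
        have e2 : c ⟨s(Sum.inr ((⟨n + 1, h2⟩ : Fin k), 0), Sum.inr ((⟨n + 2, h1⟩ : Fin k), t)),
            adj_block rfl 0 t⟩ = ((gN k c bb (n + 1) 0 != gN k c bb (n + 2) t) != bb) :=
          main0 (n + 1) h1 t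
        have e4 : c ⟨s(Sum.inr ((⟨n, by omega⟩ : Fin k), 0), Sum.inr ((⟨n + 1, h2⟩ : Fin k), 1)),
            adj_block rfl 0 1⟩ = ((gN k c bb n 0 != gN k c bb (n + 1) 1) != bb) := ih h2 0 1
        rw [e2, e4] at hq
        revert hq
        generalize c ⟨s(Sum.inr ((⟨n + 1, h2⟩ : Fin k), 1), Sum.inr ((⟨n + 2, h1⟩ : Fin k), t)),
            adj_block rfl 1 t⟩ = X
        generalize gN k c bb n 0 = A
        generalize gN k c bb (n + 1) 0 = B
        generalize gN k c bb (n + 2) t = C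
        generalize gN k c bb (n + 1) 1 = D
        cases X <;> cases A <;> cases B <;> cases C <;> cases D <;> cases bb <;> decide
  -- assemble the parameter
  set g : Fin (k - 1) × Fin 2 → Bool := fun p => gN k c bb (p.1.val + 1) p.2 with hg
  have hvfg : ∀ (i : Fin k) (s : Fin 2), vf g (.inr (i, s)) = gN k c bb i.val s := by
    intro i s
    by_cases hi : i.val = 0
    · rw [vf_inr_zero g hi s, hi]
      rfl
    · simp only [vf, dif_neg hi, hg]
      congr 1
      omega
  have hFc : Fmap (bb, g) = c := by
    funext e
    obtain ⟨e, he⟩ := e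
    revert he
    induction e using Sym2.ind with
    | _ a b =>
      intro he
      have hadj : (Gk k).Adj a b := he
      rcases adj_cases hadj with ⟨z, z', hzz, rfl, rfl⟩ | ⟨z, i, s, hi, hcase⟩ |
          ⟨i, j, s, t, hij, rfl, rfl⟩
      · have hcz : c ⟨s(Sum.inl z, Sum.inl z'), hadj⟩ = bb := by
          fin_cases z <;> fin_cases z'
          · exact absurd rfl hzz
          · exact hbb.symm
          · exact (col_symm c (adj_xy 1 0 (by decide))).trans hbb.symm
          · exact absurd rfl hzz
        rw [Fmap_apply _ _ hadj, vf_inl, vf_inl, hcz]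
        simp
      · have hieq : i = (⟨0, hk0⟩ : Fin k) := Fin.ext hi
        subst hieq
        rcases hcase with ⟨rfl, rfl⟩ | ⟨rfl, rfl⟩
        · rw [Fmap_apply _ _ hadj, vf_inl, vf_inr_zero g rfl s, hbase z s]
          simp
        · rw [Fmap_apply _ _ hadj, vf_inl, vf_inr_zero g rfl s, col_symm c hadj, hbase z s]
          simp
      · rcases hij with hij | hij
        · obtain ⟨jv, hjlt⟩ := j
          have hjv2 : jv = i.val + 1 := hij
          subst hjv2
          rw [Fmap_apply _ _ hadj, hvfg i s, hvfg ⟨i.val + 1, hjlt⟩ t]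
          exact (main i.val (by omega) s t).symm
        · obtain ⟨iv, hilt⟩ := i
          have hiv2 : iv = j.val + 1 := hij
          subst hiv2
          rw [Fmap_apply _ _ hadj, hvfg ⟨j.val + 1, hilt⟩ s, hvfg j t, col_symm c hadj]
          have hcomm : ∀ A B bx : Bool, ((A != B) != bx) = ((B != A) != bx) := by decide
          rw [hcomm]
          exact (main j.val (by omega) t s).symm
  have hgne : g ≠ (fun _ => false) := by
    intro hgf
    have hall : ∀ v : Vt k, vf g v = false := by
      intro v
      rcases v with z | ⟨i, s⟩
      · rfl
      · by_cases hi : i.val = 0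
        · exact vf_inr_zero g hi s
        · simp [vf, dif_neg hi, hgf]
    obtain ⟨e, hce⟩ := hsurj (!bb)
    have hcon : Fmap (bb, g) e = bb := by
      obtain ⟨e, he⟩ := e
      revert he
      induction e using Sym2.ind with
      | _ a b =>
        intro he
        rw [Fmap_apply _ _ he, hall a, hall b]
        simp
    rw [hFc, hce] at hcon
    cases bb <;> simp at hcon
  exact ⟨(bb, g), hgne, hFc⟩

end NAC
end
section
open SimpleGraph
namespace NAC
variable {k : ℕ}

lemma Fmap_injective : Function.Injective
    (Fmap : Bool × (Fin (k - 1) × Fin 2 → Bool) → ((Gk k).edgeSet → Bool)) := by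
  rintro ⟨b1, g1⟩ ⟨b2, g2⟩ h
  have h01 : (0 : Fin 2) ≠ 1 := by decide
  have hb : b1 = b2 := by
    have h1 := congrFun h ⟨s(Sum.inl 0, Sum.inl 1), adj_xy 0 1 h01⟩
    rw [Fmap_apply g1 b1 (adj_xy 0 1 h01), Fmap_apply g2 b2 (adj_xy 0 1 h01)] at h1
    simpa [vf_inl] using h1
  subst hb
  have boollem : ∀ (A B B' b : Bool), ((A != B) != b) = ((A != B') != b) → B = B' := by decide
  have hvf : ∀ (i : ℕ) (hi : i < k) (s : Fin 2),
      vf g1 (.inr (⟨i, hi⟩, s)) = vf g2 (.inr (⟨i, hi⟩, s)) := by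
    intro i
    induction i with
    | zero => intro hi s; rw [vf_inr_zero g1 rfl s, vf_inr_zero g2 rfl s]
    | succ n ih =>
      intro hi s
      have hn : n < k := by omega
      have hadj : (Gk k).Adj (.inr (⟨n, hn⟩, 0)) (.inr (⟨n + 1, hi⟩, s)) := adj_block rfl 0 s
      have h1 := congrFun h ⟨s(Sum.inr (⟨n, hn⟩, 0), Sum.inr (⟨n + 1, hi⟩, s)), hadj⟩
      rw [Fmap_apply g1 b1 hadj, Fmap_apply g2 b1 hadj, ih hn 0] at h1
      exact boollem _ _ _ _ h1
  have hgg : g1 = g2 := by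
    funext p
    obtain ⟨j, s⟩ := p
    rw [← vf_succ g1 j s, ← vf_succ g2 j s]
    exact hvf (j.val + 1) (by have := j.isLt; omega) s
  rw [hgg]

end NAC
end

open NAC in
/-- For `k ≥ 2`, `nac(G_k) = 2^(2k-2) - 1 = 2^(n-4) - 1` where `n = 2k + 2`. -/
theorem statement18 (k : ℕ) (hk : 2 ≤ k) : nacNum (Gk k) = 2 ^ (2 * k - 2) - 1 := by
  have hset : {c : (Gk k).edgeSet → Bool | IsNAC (Gk k) c} =
      Fmap '' {p : Bool × (Fin (k - 1) × Fin 2 → Bool) | p.2 ≠ fun _ => false} := by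
    ext c
    constructor
    · intro hc
      obtain ⟨p, hp1, hp2⟩ := NAC_exists_param hk hc
      exact ⟨p, hp1, hp2⟩
    · rintro ⟨⟨bb, g⟩, hp, rfl⟩
      exact isNAC_Fmap bb g hp
  unfold nacNum
  rw [hset, Set.ncard_image_of_injective _ Fmap_injective]
  have hTc : {p : Bool × (Fin (k - 1) × Fin 2 → Bool) | p.2 ≠ fun _ => false} =
      {p : Bool × (Fin (k - 1) × Fin 2 → Bool) | p.2 = fun _ => false}ᶜ := by
    ext p; simp
  have hT : ({p : Bool × (Fin (k - 1) × Fin 2 → Bool) | p.2 = fun _ => false}).ncard = 2 := by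
    have hrange : {p : Bool × (Fin (k - 1) × Fin 2 → Bool) | p.2 = fun _ => false} =
        Set.range (fun b : Bool => (b, fun _ => false)) := by
      ext ⟨b, g⟩
      simp only [Set.mem_setOf_eq, Set.mem_range, Prod.mk.injEq]
      constructor
      · intro hg; exact ⟨b, rfl, hg.symm⟩
      · rintro ⟨b', _, h2⟩; exact h2.symm
    rw [hrange, ← Set.image_univ,
      Set.ncard_image_of_injective _ (fun a b hab => (Prod.ext_iff.1 hab).1),
      Set.ncard_univ]
    simp
  have hcompl := Set.ncard_add_ncard_compl
    {p : Bool × (Fin (k - 1) × Fin 2 → Bool) | p.2 = fun _ => false}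
  rw [hT] at hcompl
  have hcard : Nat.card (Bool × (Fin (k - 1) × Fin 2 → Bool)) = 2 * 2 ^ ((k - 1) * 2) := by
    simp [Nat.card_eq_fintype_card]
  rw [hcard] at hcompl
  rw [hTc]
  have hexp : 2 * k - 2 = (k - 1) * 2 := by omega
  rw [hexp]
  have hpow : 1 ≤ 2 ^ ((k - 1) * 2) := Nat.one_le_two_pow
  omega
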